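/- For the two-level extension ranking ⊒^σ induced by a nonempty family σ(F) of extensions (rank 1 for extensions, rank 2 otherwise), if x belongs to every extension (skeptically accepted) and y does not belong to every extension, then any social ranking function satisfying Pareto-efficiency ranks x strictly above y. -/

import Mathlib

/-- Strict part of a relation on sets of elements. -/
def strictPart {α : Type*} (r : Finset α → Finset α → Prop) (X Y : Finset α) : Prop :=
  r X Y ∧ ¬ r Y X

/-- There is a strict chain `X₁ ⊐ X₂ ⊐ ⋯ ⊐ Xₙ ⊐ X` of length `n` above `X`. -/
def ChainAbove {α : Type*} (r : Finset α → Finset α → Prop) (X : Finset α) (n : ℕ) : Prop :=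
  ∃ l : List (Finset α), l.length = n ∧ List.Chain' (strictPart r) (l ++ [X])

/-- The rank of a set: one plus the maximal length of a strict chain above it. -/
noncomputable def rank {α : Type*} (r : Finset α → Finset α → Prop) (X : Finset α) : ℕ :=
  sSup {n | ChainAbove r X n} + 1
/-- Strict part of a preorder on elements. -/
def sp {β : Type*} (p : β → β → Prop) (x y : β) : Prop := p x y ∧ ¬ p y x

/-- A social ranking function maps rankings over sets to rankings over elements. -/
def SRF (α : Type*) := (Finset α → Finset α → Prop) → α → α → Prop

/-- Maximal rank of any set under `r`. -/
noncomputable def maxRank {α : Type*} (r : Finset α → Finset α → Prop) : ℕ :=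
  sSup (Set.range (rank r))

/-- Pareto-efficiency of a social ranking function. -/
def ParetoEfficient {α : Type*} [DecidableEq α] (ξ : SRF α) : Prop :=
  ∀ r : Finset α → Finset α → Prop, ∀ x y : α,
    (∀ Z : Finset α, x ∉ Z → y ∉ Z → rank r (insert x Z) ≤ rank r (insert y Z)) →
    (∃ Z : Finset α, x ∉ Z ∧ y ∉ Z ∧ rank r (insert x Z) < rank r (insert y Z)) →
    sp (ξ r) x y

/-- Independence from the worst set. -/
def IndepWorstSet {α : Type*} (ξ : SRF α) : Prop :=
  ∀ r r' : Finset α → Finset α → Prop,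
    (∀ X : Finset α, rank r X < maxRank r → rank r' X = rank r X) →
    (∀ X : Finset α, rank r X = maxRank r → maxRank r ≤ rank r' X) →
    ∀ x y : α, sp (ξ r) x y → sp (ξ r') x y

/-- Dominating set axiom. -/
def DominatingSet {α : Type*} (ξ : SRF α) : Prop :=
  ∀ r : Finset α → Finset α → Prop, ∀ x y : α,
    (∃ X : Finset α, x ∈ X ∧ ∀ Y : Finset α, y ∈ Y → strictPart r X Y) →
    sp (ξ r) x y

/-!
Under `⊒^σ` every extension has rank 1 and every other set rank 2, since a strict chain can
only step from an extension to a non-extension. If `x` lies in every extension, then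
`Z ∪ {y}` (with `x ∉ Z`) is never an extension, so it has the worst rank and `x` is weakly
better everywhere; and for an extension `E ∌ y`, the set `Z = E \ {x}` makes `x` strictly
better. Pareto-efficiency then concludes.
-/

section ChainAbove

variable {α : Type*} {r : Finset α → Finset α → Prop}

theorem chainAbove_zero (X : Finset α) : ChainAbove r X 0 :=
  ⟨[], rfl, List.isChain_singleton X⟩

theorem chainAbove_succ_iff {X : Finset α} {n : ℕ} :
    ChainAbove r X (n + 1) ↔ ∃ Y, strictPart r Y X ∧ ChainAbove r Y n := by
  constructor
  · rintro ⟨l, hlen, hchain⟩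
    have hl : l ≠ [] := List.ne_nil_of_length_pos (by omega)
    rw [← List.dropLast_append_getLast hl, List.append_assoc, List.singleton_append] at hchain
    obtain ⟨hinit, hlast, -⟩ := List.isChain_append_cons_cons.mp hchain
    exact ⟨l.getLast hl, hlast, l.dropLast, by simp [hlen], hinit⟩
  · rintro ⟨Y, hYX, l, rfl, hchain⟩
    refine ⟨l ++ [Y], by simp, ?_⟩
    rw [List.append_assoc, List.singleton_append]
    exact List.isChain_append_cons_cons.mpr ⟨hchain, hYX, List.isChain_singleton X⟩

theorem rank_eq_of_chainAbove_iff {X : Finset α} {k : ℕ} (h : ∀ n, ChainAbove r X n ↔ n ≤ k) :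
    rank r X = k + 1 := by
  have hset : {n | ChainAbove r X n} = Set.Iic k := Set.ext h
  rw [rank, hset, csSup_Iic]

end ChainAbove

/-- The two-level ranking `⊒^σ` induced by the family `ext = σ(F)` of extensions. -/
def extRanking {α : Type*} (ext : Set (Finset α)) : Finset α → Finset α → Prop :=
  fun X Y => X ∈ ext ∧ Y ∉ ext

section extRanking

variable {α : Type*} {ext : Set (Finset α)}

theorem strictPart_extRanking {X Y : Finset α} :
    strictPart (extRanking ext) X Y ↔ X ∈ ext ∧ Y ∉ ext := by
  simp only [strictPart, extRanking]
  tauto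

theorem not_chainAbove_extRanking_add_two (X : Finset α) (n : ℕ) :
    ¬ ChainAbove (extRanking ext) X (n + 2) := by
  simp only [chainAbove_succ_iff, strictPart_extRanking]
  rintro ⟨Y, ⟨hY, -⟩, Z, ⟨-, hY'⟩, -⟩
  exact hY' hY

theorem rank_extRanking_of_mem {X : Finset α} (hX : X ∈ ext) : rank (extRanking ext) X = 1 := by
  refine rank_eq_of_chainAbove_iff fun n => ⟨fun h => ?_, fun h => ?_⟩
  · obtain _ | n := n
    · rfl
    obtain ⟨Y, hYX, -⟩ := chainAbove_succ_iff.mp h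
    exact absurd hX (strictPart_extRanking.mp hYX).2
  · rw [Nat.le_zero.mp h]
    exact chainAbove_zero X

theorem rank_extRanking_of_notMem {E X : Finset α} (hE : E ∈ ext) (hX : X ∉ ext) :
    rank (extRanking ext) X = 2 := by
  refine rank_eq_of_chainAbove_iff fun n => ⟨fun h => ?_, fun h => ?_⟩
  · by_contra! hn
    obtain ⟨m, rfl⟩ := Nat.exists_eq_add_of_le' hn
    exact not_chainAbove_extRanking_add_two X m h
  · interval_cases n
    · exact chainAbove_zero X
    · exact chainAbove_succ_iff.mpr
        ⟨E, strictPart_extRanking.mpr ⟨hE, hX⟩, chainAbove_zero E⟩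

theorem rank_extRanking_le_of_notMem {E X Y : Finset α} (hE : E ∈ ext) (hY : Y ∉ ext) :
    rank (extRanking ext) X ≤ rank (extRanking ext) Y := by
  rw [rank_extRanking_of_notMem hE hY]
  by_cases hX : X ∈ ext
  · rw [rank_extRanking_of_mem hX]; omega
  · rw [rank_extRanking_of_notMem hE hX]

end extRanking

theorem stmt6_general {α : Type*} [DecidableEq α]
    (ext : Set (Finset α))
    (ξ : SRF α) (hP : ParetoEfficient ξ) (x y : α)
    (hx : ∀ E ∈ ext, x ∈ E) (hy : ∃ E ∈ ext, y ∉ E) :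
    sp (ξ (fun X Y => X ∈ ext ∧ Y ∉ ext)) x y := by
  obtain ⟨E, hE, hyE⟩ := hy
  have hxE : x ∈ E := hx E hE
  have hxy : x ≠ y := ne_of_mem_of_not_mem hxE hyE
  have insert_y_notMem : ∀ Z : Finset α, x ∉ Z → insert y Z ∉ ext := fun Z hxZ hZ =>
    (Finset.mem_insert.mp (hx _ hZ)).elim hxy hxZ
  apply hP (extRanking ext) x y
  · exact fun Z hxZ _ => rank_extRanking_le_of_notMem hE (insert_y_notMem Z hxZ)
  · refine ⟨E.erase x, Finset.notMem_erase x E, fun h => hyE (Finset.mem_of_mem_erase h), ?_⟩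
    rw [Finset.insert_erase hxE, rank_extRanking_of_mem hE,
      rank_extRanking_of_notMem hE (insert_y_notMem _ (Finset.notMem_erase x E))]
    omega

/-- under the two-level extension ranking, a Pareto-efficient social
ranking function ranks every skeptically accepted argument strictly above every
argument that is not skeptically accepted. -/
theorem stmt6 {α : Type*} [Fintype α] [DecidableEq α]
    (ext : Set (Finset α)) (hne : ext.Nonempty)
    (ξ : SRF α) (hP : ParetoEfficient ξ) (x y : α)
    (hx : ∀ E ∈ ext, x ∈ E) (hy : ∃ E ∈ ext, y ∉ E) :
    sp (ξ (fun X Y => X ∈ ext ∧ Y ∉ ext)) x y :=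
  stmt6_general ext ξ hP x y hx hy
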